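/- A finite connected simple graph G is 1-stress regular if and only if G is isomorphic to the cycle C_4 or the cycle C_5. -/
import Mathlib


namespace SimpleGraph

variable {V : Type*}

/-- A walk is a *geodesic* if it is a path whose length equals the distance
between its endpoints. -/
def IsGeodesic (G : SimpleGraph V) {u w : V} (p : G.Walk u w) : Prop :=
  p.IsPath ∧ p.length = G.dist u w

/-- A walk *passes through* `v` if `v` is an internal vertex of it. -/
def Walk.PassesThrough {G : SimpleGraph V} {u w : V} (p : G.Walk u w) (v : V) : Prop :=
  v ∈ p.support ∧ v ≠ u ∧ v ≠ w

/-- The *stress* of a vertex `v`: the number of geodesics passing through `v`.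
Each (undirected) geodesic is traversed in two directions, so we count directed
geodesics and halve. -/
noncomputable def stress (G : SimpleGraph V) (v : V) : ℕ :=
  {p : Σ u : V, Σ w : V, G.Walk u w |
    G.IsGeodesic p.2.2 ∧ p.2.2.PassesThrough v}.ncard / 2

variable {G : SimpleGraph V}

lemma walk_len2 {u w : V} (p : G.Walk u w) (h : p.length = 2) :
    ∃ (x : V) (h1 : G.Adj u x) (h2 : G.Adj x w),
      p = Walk.cons h1 (Walk.cons h2 Walk.nil) := by
  cases p with
  | nil => simp at h
  | cons h1 q =>
    cases q with
    | nil => simp at h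
    | cons h2 r =>
      cases r with
      | nil => exact ⟨_, h1, h2, rfl⟩
      | cons h3 s => simp [Walk.length_cons] at h

lemma walk_len1 {u w : V} (p : G.Walk u w) (h : p.length = 1) : G.Adj u w := by
  cases p with
  | nil => simp at h
  | cons h1 q =>
    cases q with
    | nil => exact h1
    | cons h2 r => simp [Walk.length_cons] at h

lemma IsGeodesic.reverse' {u w : V} {p : G.Walk u w} (h : G.IsGeodesic p) :
    G.IsGeodesic p.reverse :=
  ⟨h.1.reverse, by rw [Walk.length_reverse, dist_comm]; exact h.2⟩

lemma Reachable.exists_isGeodesic {u w : V} (h : G.Reachable u w) :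
    ∃ p : G.Walk u w, G.IsGeodesic p := by
  classical
  obtain ⟨p, hp⟩ := h.exists_walk_length_eq_dist
  refine ⟨p.bypass, p.bypass_isPath, le_antisymm ?_ (dist_le _)⟩
  exact le_trans p.length_bypass_le (le_of_eq hp)

lemma isGeodesic_cons_cons {a v b : V} (h1 : G.Adj a v) (h2 : G.Adj v b)
    (hne : a ≠ b) (hnadj : ¬ G.Adj a b) :
    G.IsGeodesic (Walk.cons h1 (Walk.cons h2 Walk.nil)) := by
  constructor
  · simp [Walk.cons_isPath_iff, h1.ne, h2.ne, hne]
  · have hle : G.dist a b ≤ 2 := dist_le (Walk.cons h1 (Walk.cons h2 Walk.nil))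
    have hr : G.Reachable a b := ⟨Walk.cons h1 (Walk.cons h2 Walk.nil)⟩
    have h0 : G.dist a b ≠ 0 := by
      intro h; exact hne (hr.dist_eq_zero_iff.mp h)
    have hone : G.dist a b ≠ 1 := by
      intro hd
      obtain ⟨q, hq⟩ := hr.exists_walk_length_eq_dist
      exact hnadj (walk_len1 q (by rw [hq, hd]))
    simp only [Walk.length_cons, Walk.length_nil]
    omega

/-- The set of ordered pairs of nonadjacent neighbours of `v`. -/
def pairSet (G : SimpleGraph V) (v : V) : Set (V × V) :=
  {q : V × V | G.Adj v q.1 ∧ G.Adj v q.2 ∧ q.1 ≠ q.2 ∧ ¬ G.Adj q.1 q.2}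

lemma mem_pairSet {v a b : V} :
    (a, b) ∈ G.pairSet v ↔ G.Adj v a ∧ G.Adj v b ∧ a ≠ b ∧ ¬ G.Adj a b := Iff.rfl

lemma pairSet_swap {v a b : V} (h : (a, b) ∈ G.pairSet v) : (b, a) ∈ G.pairSet v := by
  obtain ⟨h1, h2, h3, h4⟩ := h
  exact ⟨h2, h1, h3.symm, fun h => h4 h.symm⟩

lemma geodesic_through {u w v : V} {p : G.Walk u w} (hg : G.IsGeodesic p)
    (hpt : p.PassesThrough v) (hle : p.length ≤ 2) :
    ∃ (h1 : G.Adj u v) (h2 : G.Adj v w),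
      p = Walk.cons h1 (Walk.cons h2 Walk.nil) ∧ u ≠ w ∧ ¬ G.Adj u w := by
  obtain ⟨hs, hvu, hvw⟩ := hpt
  have hlen : p.length = 2 := by
    cases p with
    | nil => simp at hs; exact absurd hs hvu
    | cons h q =>
      cases q with
      | nil => simp at hs; rcases hs with h' | h' <;> simp_all
      | cons h' r =>
        cases r with
        | nil => rfl
        | cons h'' s => simp [Walk.length_cons] at hle
  obtain ⟨x, hux, hxw, rfl⟩ := walk_len2 p hlen
  have hvx : v = x := by
    simp [Walk.support_cons] at hs
    rcases hs with h | h | h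
    · exact absurd h hvu
    · exact h
    · exact absurd h hvw
  subst hvx
  have hd : G.dist u w = 2 := by rw [← hg.2, hlen]
  have hne : u ≠ w := by
    intro h; subst h
    rw [dist_self] at hd; exact two_ne_zero hd.symm
  have hnadj : ¬ G.Adj u w := by
    intro hadj
    have := dist_le (Walk.cons hadj Walk.nil)
    rw [hd] at this; simp at this
  exact ⟨hux, hxw, rfl, hne, hnadj⟩

lemma stressSet_image (v : V)
    (h2 : ∀ (u w : V) (p : G.Walk u w), G.IsGeodesic p → p.length ≤ 2) :
    (fun p : Σ u : V, Σ w : V, G.Walk u w => (p.1, p.2.1)) ''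
      {p : Σ u : V, Σ w : V, G.Walk u w |
        G.IsGeodesic p.2.2 ∧ p.2.2.PassesThrough v} = G.pairSet v := by
  ext ⟨a, b⟩
  simp only [pairSet, Set.mem_setOf_eq, Set.mem_image]
  constructor
  · rintro ⟨⟨u, w, p⟩, ⟨hg, hpt⟩, heq⟩
    obtain ⟨rfl, rfl⟩ : u = a ∧ w = b := by simpa [Prod.ext_iff] using heq
    obtain ⟨h1, h2', -, hne, hnadj⟩ := geodesic_through hg hpt (h2 _ _ p hg)
    exact ⟨h1.symm, h2', hne, hnadj⟩
  · rintro ⟨ha, hb, hne, hnadj⟩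
    refine ⟨⟨a, b, Walk.cons ha.symm (Walk.cons hb Walk.nil)⟩,
      ⟨isGeodesic_cons_cons ha.symm hb hne hnadj, ?_, ?_, ?_⟩, rfl⟩
    · simp
    · exact ha.ne
    · exact hb.ne

lemma stressSet_injOn (v : V)
    (h2 : ∀ (u w : V) (p : G.Walk u w), G.IsGeodesic p → p.length ≤ 2) :
    Set.InjOn (fun p : Σ u : V, Σ w : V, G.Walk u w => (p.1, p.2.1))
      {p : Σ u : V, Σ w : V, G.Walk u w |
        G.IsGeodesic p.2.2 ∧ p.2.2.PassesThrough v} := by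
  rintro ⟨u, w, p⟩ ⟨hg, hpt⟩ ⟨u', w', p'⟩ ⟨hg', hpt'⟩ heq
  obtain ⟨rfl, rfl⟩ : u = u' ∧ w = w' := by simpa [Prod.ext_iff] using heq
  obtain ⟨h1, hh2, hp, -, -⟩ := geodesic_through hg hpt (h2 _ _ p hg)
  obtain ⟨h1', hh2', hp', -, -⟩ := geodesic_through hg' hpt' (h2 _ _ p' hg')
  simp only at hp hp'
  have : p = p' := by rw [hp, hp']
  rw [this]

lemma four_le_ncard' {α : Type*} {s : Set α} (hs : s.Finite) {a b c d : α}
    (ha : a ∈ s) (hb : b ∈ s) (hc : c ∈ s) (hd : d ∈ s)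
    (hab : a ≠ b) (hac : a ≠ c) (had : a ≠ d) (hbc : b ≠ c) (hbd : b ≠ d) (hcd : c ≠ d) :
    4 ≤ s.ncard := by
  have hsub : ({a, b, c, d} : Set α) ⊆ s := by
    intro x hx
    rcases hx with rfl | rfl | rfl | rfl <;> assumption
  have h4 : ({a, b, c, d} : Set α).ncard = 4 := by
    rw [Set.ncard_insert_of_notMem (by simp [hab, hac, had]) (Set.toFinite _),
      Set.ncard_insert_of_notMem (by simp [hbc, hbd]) (Set.toFinite _),
      Set.ncard_insert_of_notMem (by simp [hcd]) (Set.toFinite _),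
      Set.ncard_singleton]
  calc 4 = ({a, b, c, d} : Set α).ncard := h4.symm
    _ ≤ s.ncard := Set.ncard_le_ncard hsub hs

lemma stressSet_finite [Fintype V] (v : V) :
    {p : Σ u : V, Σ w : V, G.Walk u w |
      G.IsGeodesic p.2.2 ∧ p.2.2.PassesThrough v}.Finite := by
  classical
  have : {p : Σ u : V, Σ w : V, G.Walk u w |
      G.IsGeodesic p.2.2 ∧ p.2.2.PassesThrough v} ⊆
      Set.range (fun q : Σ u : V, Σ w : V,
          {p : G.Walk u w // p.IsPath ∧ p.length < Fintype.card V} =>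
        (⟨q.1, q.2.1, q.2.2.val⟩ : Σ u : V, Σ w : V, G.Walk u w)) := by
    rintro ⟨u, w, p⟩ ⟨hg, -⟩
    exact ⟨⟨u, w, p, hg.1, hg.1.length_lt⟩, rfl⟩
  exact Set.Finite.subset (Set.finite_range _) this

/-- Characterisation of `stress v = 1` for graphs all of whose geodesics are short. -/
lemma stress_eq_one_iff [Fintype V] (v : V)
    (h2 : ∀ (u w : V) (p : G.Walk u w), G.IsGeodesic p → p.length ≤ 2) :
    G.stress v = 1 ↔ ∃ a b, (a, b) ∈ G.pairSet v ∧
      ∀ c d, (c, d) ∈ G.pairSet v → (c = a ∧ d = b) ∨ (c = b ∧ d = a) := by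
  have hcard : {p : Σ u : V, Σ w : V, G.Walk u w |
      G.IsGeodesic p.2.2 ∧ p.2.2.PassesThrough v}.ncard = (G.pairSet v).ncard := by
    rw [← stressSet_image v h2, Set.ncard_image_of_injOn (stressSet_injOn v h2)]
  unfold stress
  rw [hcard]
  constructor
  · intro h
    have h23 : 2 ≤ (G.pairSet v).ncard ∧ (G.pairSet v).ncard ≤ 3 := by omega
    have hfin : (G.pairSet v).Finite := Set.toFinite _
    have hne : (G.pairSet v).Nonempty := by
      apply Set.nonempty_of_ncard_ne_zero; omega
    obtain ⟨⟨a, b⟩, hab⟩ := hne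
    refine ⟨a, b, hab, ?_⟩
    intro c d hcd
    by_contra hq
    push_neg at hq
    have hba := pairSet_swap hab
    have hdc := pairSet_swap hcd
    have hab' : a ≠ b := hab.2.2.1
    have hcd' : c ≠ d := hcd.2.2.1
    have h1 : (a, b) ≠ (b, a) := by simp [Prod.ext_iff]; intro h; exact absurd h hab'
    have h2' : (c, d) ≠ (d, c) := by simp [Prod.ext_iff]; intro h; exact absurd h hcd'
    have h3 : (a, b) ≠ (c, d) := by
      intro h; rw [Prod.ext_iff] at h; exact hq.1 h.1.symm h.2.symm
    have h4 : (a, b) ≠ (d, c) := by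
      intro h; rw [Prod.ext_iff] at h; exact hq.2 h.2.symm h.1.symm
    have h5 : (b, a) ≠ (c, d) := by
      intro h; rw [Prod.ext_iff] at h; exact hq.2 h.1.symm h.2.symm
    have h6 : (b, a) ≠ (d, c) := by
      intro h; rw [Prod.ext_iff] at h; exact hq.1 h.2.symm h.1.symm
    have := four_le_ncard' hfin hab hba hcd hdc h1 h3 h4 h5 h6 h2'
    omega
  · rintro ⟨a, b, hab, huniq⟩
    have hset : G.pairSet v = {(a, b), (b, a)} := by
      ext ⟨c, d⟩
      constructor
      · intro h
        rcases huniq c d h with ⟨rfl, rfl⟩ | ⟨rfl, rfl⟩ <;> simp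
      · intro h
        rcases h with h | h
        · rw [Prod.ext_iff] at h; obtain ⟨rfl, rfl⟩ := h; exact hab
        · simp only [Set.mem_singleton_iff, Prod.ext_iff] at h
          obtain ⟨rfl, rfl⟩ := h; exact pairSet_swap hab
    rw [hset, Set.ncard_pair (by simp [Prod.ext_iff]; intro h; exact absurd h hab.2.2.1)]

/-- If every vertex has stress 1, then every geodesic has length at most 2. -/
lemma short_geodesics [Fintype V] (hst : ∀ v : V, G.stress v = 1) :
    ∀ (u w : V) (p : G.Walk u w), G.IsGeodesic p → p.length ≤ 2 := by
  intro u w p hg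
  by_contra hlong
  push_neg at hlong
  cases p with
  | nil => simp at hlong
  | cons h1 q =>
    cases q with
    | nil => simp at hlong
    | cons h2 r =>
      rename_i a b
      -- h1 : G.Adj u a, h2 : G.Adj a b, r : G.Walk b w
      have hrlen : 1 ≤ r.length := by
        simp only [Walk.length_cons] at hlong; omega
      have hdist : G.dist u w = r.length + 2 := by
        rw [← hg.2]; simp [Walk.length_cons]
      -- dist u b = 2
      have hreachub : G.Reachable u b := ⟨Walk.cons h1 (Walk.cons h2 Walk.nil)⟩
      have hdub : G.dist u b = 2 := by
        have hle : G.dist u b ≤ 2 := by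
          have := dist_le (Walk.cons h1 (Walk.cons h2 Walk.nil))
          simpa using this
        have hge : 2 ≤ G.dist u b := by
          obtain ⟨q0, hq0⟩ := hreachub.exists_walk_length_eq_dist
          have := dist_le (q0.append r)
          rw [Walk.length_append, hq0, hdist] at this
          omega
        omega
      have hub : u ≠ b := by
        intro h; subst h; rw [dist_self] at hdub; exact two_ne_zero hdub.symm
      have hnadjub : ¬ G.Adj u b := by
        intro hadj
        have := dist_le (Walk.cons hadj Walk.nil)
        rw [hdub] at this; simp at this
      -- the path u - a - b is a geodesic
      have hpre : G.IsGeodesic (Walk.cons h1 (Walk.cons h2 Walk.nil)) :=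
        isGeodesic_cons_cons h1 h2 hub hnadjub
      -- a ≠ w
      have haw : a ≠ w := by
        intro h; subst h
        have := dist_le (Walk.cons h1 Walk.nil)
        rw [hdist] at this; simp [Walk.length_cons] at this
      have hauw : u ≠ w := by
        intro h; subst h
        rw [dist_self] at hdist; omega
      have hbw : b ≠ w := by
        intro h; subst h
        rw [hdub] at hdist; omega
      -- four distinct directed geodesics through a
      set S := {p : Σ u : V, Σ w : V, G.Walk u w |
        G.IsGeodesic p.2.2 ∧ p.2.2.PassesThrough a} with hS
      have m1 : (⟨u, w, Walk.cons h1 (Walk.cons h2 r)⟩ :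
          Σ u : V, Σ w : V, G.Walk u w) ∈ S := by
        refine ⟨hg, by simp, h1.ne', haw⟩
      have m2 : (⟨w, u, (Walk.cons h1 (Walk.cons h2 r)).reverse⟩ :
          Σ u : V, Σ w : V, G.Walk u w) ∈ S := by
        refine ⟨hg.reverse', ?_, haw, h1.ne'⟩
        rw [Walk.support_reverse, List.mem_reverse]; simp
      have m3 : (⟨u, b, Walk.cons h1 (Walk.cons h2 Walk.nil)⟩ :
          Σ u : V, Σ w : V, G.Walk u w) ∈ S := by
        refine ⟨hpre, by simp, h1.ne', h2.ne⟩
      have m4 : (⟨b, u, (Walk.cons h1 (Walk.cons h2 Walk.nil)).reverse⟩ :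
          Σ u : V, Σ w : V, G.Walk u w) ∈ S := by
        refine ⟨hpre.reverse', ?_, h2.ne, h1.ne'⟩
        rw [Walk.support_reverse, List.mem_reverse]; simp
      have hcard : 4 ≤ S.ncard := by
        refine four_le_ncard' (stressSet_finite a) m1 m2 m3 m4 ?_ ?_ ?_ ?_ ?_ ?_
        · exact fun h => hauw (congrArg Sigma.fst h)
        · exact fun h => hbw (congrArg (fun p => p.2.1) h).symm
        · exact fun h => hub (congrArg Sigma.fst h)
        · exact fun h => hauw (congrArg Sigma.fst h).symm
        · exact fun h => hbw ((congrArg Sigma.fst h)).symm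
        · exact fun h => hub (congrArg Sigma.fst h)
      have := hst a
      unfold stress at this
      rw [← hS] at this
      omega

lemma common_nbr [Fintype V] (hconn : G.Connected)
    (h2 : ∀ (u w : V) (p : G.Walk u w), G.IsGeodesic p → p.length ≤ 2) :
    ∀ u w : V, u ≠ w → ¬ G.Adj u w → ∃ x, G.Adj u x ∧ G.Adj x w := by
  intro u w hne hnadj
  obtain ⟨p, hp⟩ := (hconn u w).exists_isGeodesic
  have hlen := h2 _ _ p hp
  cases p with
  | nil => exact absurd rfl hne
  | cons h1 q =>
    cases q with
    | nil => exact absurd h1 hnadj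
    | cons h2' r =>
      cases r with
      | nil => exact ⟨_, h1, h2'⟩
      | cons h3 s => simp [Walk.length_cons] at hlen


lemma stress_eq_one_of_iso {n : ℕ} [Fintype V] {G : SimpleGraph V} (e : G ≃g cycleGraph n)
    (hC : ∀ u w : Fin n, u ≠ w → ¬(cycleGraph n).Adj u w →
      ∃ x, (cycleGraph n).Adj u x ∧ (cycleGraph n).Adj x w)
    (hP : ∀ v : Fin n, ∃ a b,
      ((cycleGraph n).Adj v a ∧ (cycleGraph n).Adj v b ∧ a ≠ b ∧ ¬(cycleGraph n).Adj a b) ∧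
      ∀ c d, ((cycleGraph n).Adj v c ∧ (cycleGraph n).Adj v d ∧ c ≠ d ∧
        ¬(cycleGraph n).Adj c d) → (c = a ∧ d = b) ∨ (c = b ∧ d = a))
    (v : V) : G.stress v = 1 := by
  classical
  have hAdj : ∀ x y : V, G.Adj x y ↔ (cycleGraph n).Adj (e x) (e y) :=
    fun x y => (e.map_adj_iff).symm
  have hdist : ∀ u w : V, G.dist u w ≤ 2 := by
    intro u w
    by_cases huw : u = w
    · subst huw; simp [dist_self]
    by_cases hadj : G.Adj u w
    · have := dist_le (Walk.cons hadj Walk.nil)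
      simpa using this.trans (by norm_num)
    · obtain ⟨x', hx1, hx2⟩ := hC (e u) (e w)
        (fun h => huw (e.injective h)) (fun h => hadj ((hAdj u w).mpr h))
      have h1 : G.Adj u (e.symm x') := by
        rw [hAdj]; rwa [e.apply_symm_apply]
      have h2' : G.Adj (e.symm x') w := by
        rw [hAdj]; rwa [e.apply_symm_apply]
      have := dist_le (Walk.cons h1 (Walk.cons h2' Walk.nil))
      simpa using this
  have h2 : ∀ (u w : V) (p : G.Walk u w), G.IsGeodesic p → p.length ≤ 2 := by
    intro u w p hp
    rw [hp.2]; exact hdist u w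
  rw [stress_eq_one_iff v h2]
  obtain ⟨a', b', ⟨h1, h2', h3, h4⟩, hu⟩ := hP (e v)
  refine ⟨e.symm a', e.symm b', ⟨?_, ?_, ?_, ?_⟩, ?_⟩
  · rw [hAdj, e.apply_symm_apply]; exact h1
  · rw [hAdj, e.apply_symm_apply]; exact h2'
  · intro h; exact h3 (by simpa using congrArg e h)
  · intro h; rw [hAdj, e.apply_symm_apply, e.apply_symm_apply] at h; exact h4 h
  · rintro c d ⟨hc1, hc2, hc3, hc4⟩
    have := hu (e c) (e d) ⟨(hAdj v c).mp hc1, (hAdj v d).mp hc2,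
      fun h => hc3 (e.injective h), fun h => hc4 ((hAdj c d).mpr h)⟩
    rcases this with ⟨hca, hdb⟩ | ⟨hcb, hda⟩
    · left
      constructor
      · have := congrArg e.symm hca; rwa [e.symm_apply_apply] at this
      · have := congrArg e.symm hdb; rwa [e.symm_apply_apply] at this
    · right
      constructor
      · have := congrArg e.symm hcb; rwa [e.symm_apply_apply] at this
      · have := congrArg e.symm hda; rwa [e.symm_apply_apply] at this



lemma iso_c4_of [Fintype V] {G : SimpleGraph V} {v a a2 b : V}
    (hva : v ≠ a) (hvb : v ≠ b) (hva2 : v ≠ a2) (hab : a ≠ b) (haa2 : a ≠ a2) (ha2b : a2 ≠ b)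
    (hv : ∀ x, G.Adj v x ↔ x = a ∨ x = b)
    (ha : ∀ x, G.Adj a x ↔ x = v ∨ x = a2)
    (ha2 : ∀ x, G.Adj a2 x ↔ x = a ∨ x = b)
    (hb : ∀ x, G.Adj b x ↔ x = v ∨ x = a2)
    (hall : ∀ u, u = v ∨ u = a ∨ u = b ∨ u = a2) :
    Nonempty (G ≃g cycleGraph 4) := by
  classical
  have hinj : Function.Injective
      (fun i : Fin 4 => if i = 0 then v else if i = 1 then a
        else if i = 2 then a2 else b) := by
    intro i j hij
    fin_cases i <;> fin_cases j <;> simp_all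
  have hsurj : Function.Surjective
      (fun i : Fin 4 => if i = 0 then v else if i = 1 then a
        else if i = 2 then a2 else b) := by
    intro u
    rcases hall u with rfl | rfl | rfl | rfl
    · exact ⟨0, rfl⟩
    · exact ⟨1, rfl⟩
    · exact ⟨3, rfl⟩
    · exact ⟨2, rfl⟩
  refine ⟨(RelIso.mk (Equiv.ofBijective _ ⟨hinj, hsurj⟩) ?_).symm⟩
  intro i j
  show G.Adj _ _ ↔ _
  fin_cases i <;> fin_cases j <;>
    simp [Equiv.ofBijective, cycleGraph_adj, hv, ha, ha2, hb,
      hva, hvb, hva2, hab, haa2, ha2b, hva.symm, hvb.symm, hva2.symm, hab.symm,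
      haa2.symm, ha2b.symm, Ne.symm] <;> decide

lemma iso_c5_of [Fintype V] {G : SimpleGraph V} {v a a2 b2 b : V}
    (hva : v ≠ a) (hvb : v ≠ b) (hva2 : v ≠ a2) (hvb2 : v ≠ b2)
    (hab : a ≠ b) (haa2 : a ≠ a2) (hab2 : a ≠ b2)
    (hba2 : b ≠ a2) (hbb2 : b ≠ b2) (ha2b2 : a2 ≠ b2)
    (hv : ∀ x, G.Adj v x ↔ x = a ∨ x = b)
    (ha : ∀ x, G.Adj a x ↔ x = v ∨ x = a2)
    (ha2 : ∀ x, G.Adj a2 x ↔ x = a ∨ x = b2)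
    (hb2 : ∀ x, G.Adj b2 x ↔ x = b ∨ x = a2)
    (hb : ∀ x, G.Adj b x ↔ x = v ∨ x = b2)
    (hall : ∀ u, u = v ∨ u = a ∨ u = b ∨ u = a2 ∨ u = b2) :
    Nonempty (G ≃g cycleGraph 5) := by
  classical
  have hinj : Function.Injective
      (fun i : Fin 5 => if i = 0 then v else if i = 1 then a else if i = 2 then a2
        else if i = 3 then b2 else b) := by
    intro i j hij
    fin_cases i <;> fin_cases j <;> simp_all
  have hsurj : Function.Surjective
      (fun i : Fin 5 => if i = 0 then v else if i = 1 then a else if i = 2 then a2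
        else if i = 3 then b2 else b) := by
    intro u
    rcases hall u with rfl | rfl | rfl | rfl | rfl
    · exact ⟨0, rfl⟩
    · exact ⟨1, rfl⟩
    · exact ⟨4, rfl⟩
    · exact ⟨2, rfl⟩
    · exact ⟨3, rfl⟩
  refine ⟨(RelIso.mk (Equiv.ofBijective _ ⟨hinj, hsurj⟩) ?_).symm⟩
  intro i j
  show G.Adj _ _ ↔ _
  fin_cases i <;> fin_cases j <;>
    simp [Equiv.ofBijective, cycleGraph_adj, hv, ha, ha2, hb2, hb,
      hva, hvb, hva2, hvb2, hab, haa2, hab2, hba2, hbb2, ha2b2,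
      hva.symm, hvb.symm, hva2.symm, hvb2.symm, hab.symm, haa2.symm, hab2.symm,
      hba2.symm, hbb2.symm, ha2b2.symm] <;> decide


end SimpleGraph

/-- A finite connected simple graph is `1`-stress regular iff it is isomorphic to the
cycle `C₄` or to the cycle `C₅`. -/
theorem one_stress_regular_iff_cycle {V : Type*} [Fintype V] (G : SimpleGraph V)
    (hG : G.Connected) :
    (∀ v : V, G.stress v = 1) ↔
      Nonempty (G ≃g SimpleGraph.cycleGraph 4) ∨
        Nonempty (G ≃g SimpleGraph.cycleGraph 5) := by
  classical
  constructor
  · intro hst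
    have h2 := SimpleGraph.short_geodesics hst
    have hcn := SimpleGraph.common_nbr hG h2
    have hex : ∀ v : V, ∃ a b, (a, b) ∈ G.pairSet v ∧
        ∀ c d, (c, d) ∈ G.pairSet v → (c = a ∧ d = b) ∨ (c = b ∧ d = a) :=
      fun v => (SimpleGraph.stress_eq_one_iff v h2).mp (hst v)
    have huniq : ∀ v a b c d, (a, b) ∈ G.pairSet v → (c, d) ∈ G.pairSet v →
        (c = a ∧ d = b) ∨ (c = b ∧ d = a) := by
      intro v a b c d hab hcd
      obtain ⟨a₀, b₀, h₀, hu⟩ := hex v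
      rcases hu a b hab with ⟨rfl, rfl⟩ | ⟨rfl, rfl⟩
      · exact hu c d hcd
      · rcases hu c d hcd with ⟨rfl, rfl⟩ | ⟨rfl, rfl⟩
        · right; exact ⟨rfl, rfl⟩
        · left; exact ⟨rfl, rfl⟩
    -- no vertex has a third neighbour
    have hdeg : ∀ v a b, (a, b) ∈ G.pairSet v → ∀ c, G.Adj v c → c = a ∨ c = b := by
      intro v a b hab c hvc
      by_contra hc
      push_neg at hc
      obtain ⟨hca, hcb⟩ := hc
      obtain ⟨hva, hvb, hne, hnadj⟩ := hab
      have hC : ∀ z, G.Adj v z → z ≠ a → z ≠ b → (a, b) ∈ G.pairSet z := by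
        intro z hvz hza hzb
        have hAza : G.Adj z a := by
          by_contra h
          rcases huniq v a b z a ⟨hva, hvb, hne, hnadj⟩ ⟨hvz, hva, hza, h⟩ with
            ⟨h1, -⟩ | ⟨h1, -⟩
          · exact hza h1
          · exact hzb h1
        have hAzb : G.Adj z b := by
          by_contra h
          rcases huniq v a b z b ⟨hva, hvb, hne, hnadj⟩ ⟨hvz, hvb, hzb, h⟩ with
            ⟨h1, -⟩ | ⟨h1, -⟩
          · exact hza h1
          · exact hzb h1
        exact ⟨hAza, hAzb, hne, hnadj⟩
      have habc : (a, b) ∈ G.pairSet c := hC c hvc hca hcb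
      have hNc : ∀ x, G.Adj c x → x = v ∨ G.Adj v x := by
        intro x hcx
        by_contra h
        push_neg at h
        obtain ⟨hxv, hxnadj⟩ := h
        have hmem : (x, v) ∈ G.pairSet c := ⟨hcx, hvc.symm, hxv, fun h' => hxnadj h'.symm⟩
        rcases huniq c a b x v habc hmem with ⟨-, h2'⟩ | ⟨-, h2'⟩
        · exact hvb.ne h2'
        · exact hva.ne h2'
      have key : ∀ z, G.Adj v z → (z = a ∨ z = b) → ∃ w0, (w0, v) ∈ G.pairSet z := by
        intro z hvz hz
        obtain ⟨p, q, hpq⟩ := hex z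
        obtain ⟨⟨hzp, hzq, hpqne, hpqnadj⟩, -⟩ := hpq
        have houts : (p ≠ v ∧ ¬ G.Adj v p) ∨ (q ≠ v ∧ ¬ G.Adj v q) := by
          by_contra h
          push_neg at h
          obtain ⟨h1', h2'⟩ := h
          by_cases hpv : p = v
          · have hqv : q ≠ v := fun h => hpqne (hpv.trans h.symm)
            apply hpqnadj; rw [hpv]; exact h2' hqv
          · have hvp := h1' hpv
            by_cases hqv : q = v
            · apply hpqnadj; rw [hqv]; exact hvp.symm
            · have hvq := h2' hqv
              rcases huniq v a b p q ⟨hva, hvb, hne, hnadj⟩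
                ⟨hvp, hvq, hpqne, hpqnadj⟩ with ⟨hpa, hqb⟩ | ⟨hpb, hqa⟩
              · rcases hz with rfl | rfl
                · exact G.irrefl (hpa ▸ hzp)
                · exact G.irrefl (hqb ▸ hzq)
              · rcases hz with rfl | rfl
                · exact G.irrefl (hqa ▸ hzq)
                · exact G.irrefl (hpb ▸ hzp)
        rcases houts with ⟨hpv, hpnadj⟩ | ⟨hqv, hqnadj⟩
        · exact ⟨p, hzp, hvz.symm, hpv, fun h => hpnadj h.symm⟩
        · exact ⟨q, hzq, hvz.symm, hqv, fun h => hqnadj h.symm⟩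
      obtain ⟨wa, hwa⟩ := key a hva (Or.inl rfl)
      obtain ⟨wb, hwb⟩ := key b hvb (Or.inr rfl)
      obtain ⟨hawa, hav, hwav, hwanadjv⟩ := hwa
      have hvwa : ¬ G.Adj v wa := fun h => hwanadjv h.symm
      have hcwa : ¬ G.Adj c wa := by
        intro h
        rcases hNc wa h with h' | h'
        · exact hwav h'
        · exact hvwa h'
      have hwac : wa ≠ c := by
        intro h; subst h
        exact hvwa hvc
      obtain ⟨x, hwax, hxc⟩ := hcn wa c hwac (fun h => hcwa h.symm)
      rcases hNc x hxc.symm with hxv | hvx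
      · rw [hxv] at hwax; exact hwanadjv hwax
      have hprx : (wa, c) ∈ G.pairSet x := ⟨hwax.symm, hxc, hwac, fun h => hcwa h.symm⟩
      by_cases hxa : x = a
      · rw [hxa] at hprx
        rcases huniq a wa v wa c ⟨hawa, hav, hwav, hwanadjv⟩ hprx with
          ⟨-, hcv⟩ | ⟨hwav', -⟩
        · exact hvc.ne hcv.symm
        · exact hwav hwav'
      by_cases hxb : x = b
      · rw [hxb] at hprx
        obtain ⟨hbwb, hbv, hwbv, hwbnadjv⟩ := hwb
        rcases huniq b wb v wa c ⟨hbwb, hbv, hwbv, hwbnadjv⟩ hprx with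
          ⟨-, hcv⟩ | ⟨hwav', -⟩
        · exact hvc.ne hcv.symm
        · exact hwav hwav'
      · have habx := hC x hvx hxa hxb
        rcases huniq x a b wa c habx hprx with ⟨-, hcb'⟩ | ⟨-, hca'⟩
        · exact hcb hcb'
        · exact hca hca'
    -- hence every vertex has exactly two (nonadjacent) neighbours
    have hN : ∀ v : V, ∃ a b, a ≠ b ∧ ¬ G.Adj a b ∧ ∀ x, G.Adj v x ↔ (x = a ∨ x = b) := by
      intro v
      obtain ⟨a, b, hab, -⟩ := hex v
      refine ⟨a, b, hab.2.2.1, hab.2.2.2, fun x => ⟨fun h => hdeg v a b hab x h, ?_⟩⟩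
      rintro (rfl | rfl)
      · exact hab.1
      · exact hab.2.1
    -- endgame
    obtain ⟨v⟩ := hG.nonempty
    obtain ⟨a, b, hne_ab, hnadj_ab, hv⟩ := hN v
    have hva : G.Adj v a := (hv a).mpr (Or.inl rfl)
    have hvb : G.Adj v b := (hv b).mpr (Or.inr rfl)
    -- the second neighbour of a
    have hA2 : ∃ a2, a2 ≠ v ∧ (∀ x, G.Adj a x ↔ x = v ∨ x = a2) := by
      obtain ⟨p, q, hpq, hpqnadj, ha⟩ := hN a
      rcases (ha v).mp hva.symm with h | h
      · refine ⟨q, fun hq => hpq (h.symm.trans hq.symm), fun x => by rw [ha x, ← h]⟩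
      · refine ⟨p, fun hp => hpq (hp.trans h), fun x => by rw [ha x, ← h]; tauto⟩
    obtain ⟨a2, ha2v, ha'⟩ := hA2
    have hB2 : ∃ b2, b2 ≠ v ∧ (∀ x, G.Adj b x ↔ x = v ∨ x = b2) := by
      obtain ⟨p, q, hpq, hpqnadj, hb⟩ := hN b
      rcases (hb v).mp hvb.symm with h | h
      · refine ⟨q, fun hq => hpq (h.symm.trans hq.symm), fun x => by rw [hb x, ← h]⟩
      · refine ⟨p, fun hp => hpq (hp.trans h), fun x => by rw [hb x, ← h]; tauto⟩
    obtain ⟨b2, hb2v, hb'⟩ := hB2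
    have haa2 : G.Adj a a2 := (ha' a2).mpr (Or.inr rfl)
    have hbb2 : G.Adj b b2 := (hb' b2).mpr (Or.inr rfl)
    have ha2a : a2 ≠ a := haa2.ne'
    have hb2b : b2 ≠ b := hbb2.ne'
    have ha2b : a2 ≠ b := by
      intro h; subst h; exact hnadj_ab haa2
    have hb2a : b2 ≠ a := by
      intro h; subst h; exact hnadj_ab hbb2.symm
    have hnva2 : ¬ G.Adj v a2 := by
      intro h
      rcases (hv a2).mp h with h' | h'
      · exact ha2a h'
      · exact ha2b h'
    have hnvb2 : ¬ G.Adj v b2 := by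
      intro h
      rcases (hv b2).mp h with h' | h'
      · exact hb2a h'
      · exact hb2b h'
    have hnab : ¬ G.Adj a b := hnadj_ab
    have hall : ∀ u : V, u = v ∨ u = a ∨ u = b ∨ u = a2 ∨ u = b2 := by
      intro u
      by_contra h
      push_neg at h
      obtain ⟨h1, h2', h3, h4, h5⟩ := h
      have hnadj_vu : ¬ G.Adj v u := by
        intro h'
        rcases (hv u).mp h' with rfl | rfl
        · exact h2' rfl
        · exact h3 rfl
      obtain ⟨x, hvx, hxu⟩ := hcn v u (fun h' => h1 h'.symm) hnadj_vu
      rcases (hv x).mp hvx with rfl | rfl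
      · rcases (ha' u).mp hxu with rfl | rfl
        · exact h1 rfl
        · exact h4 rfl
      · rcases (hb' u).mp hxu with rfl | rfl
        · exact h1 rfl
        · exact h5 rfl
    have hvna : v ≠ a := hva.ne
    have hvnb : v ≠ b := hvb.ne
    by_cases hcase : a2 = b2
    · -- C4
      subst hcase
      left
      -- neighbours of a2 are exactly a and b
      have hAa2a : G.Adj a2 a := haa2.symm
      have hAa2b : G.Adj a2 b := hbb2.symm
      have ha2' : ∀ x, G.Adj a2 x ↔ x = a ∨ x = b := by
        obtain ⟨s, t, hst, -, ha2⟩ := hN a2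
        have hs := (ha2 a).mp hAa2a
        have ht := (ha2 b).mp hAa2b
        intro x
        rw [ha2 x]
        rcases hs with rfl | rfl
        · rcases ht with rfl | rfl
          · exact absurd rfl hne_ab
          · tauto
        · rcases ht with rfl | rfl
          · tauto
          · exact absurd rfl hne_ab
      have hb'' : ∀ x, G.Adj b x ↔ x = v ∨ x = a2 := hb'
      have hall4 : ∀ u : V, u = v ∨ u = a ∨ u = b ∨ u = a2 := by
        intro u
        rcases hall u with h | h | h | h | h <;> tauto
      exact SimpleGraph.iso_c4_of hvna hvnb (Ne.symm ha2v) hne_ab (Ne.symm ha2a) ha2b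
        hv ha' ha2' hb'' hall4
    · -- C5
      right
      have hAa2a : G.Adj a2 a := haa2.symm
      have hnba2 : ¬ G.Adj b a2 := by
        intro h
        rcases (hb' a2).mp h with h' | h'
        · exact ha2v h'
        · exact hcase h'
      have hnab2 : ¬ G.Adj a b2 := by
        intro h
        rcases (ha' b2).mp h with h' | h'
        · exact hb2v h'
        · exact hcase h'.symm
      -- neighbours of a2
      have ha2sub : ∀ x, G.Adj a2 x → x = a ∨ x = b2 := by
        intro x h
        rcases hall x with rfl | rfl | rfl | rfl | rfl
        · exact absurd h.symm hnva2
        · exact Or.inl rfl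
        · exact absurd h.symm hnba2
        · exact absurd rfl h.ne'
        · exact Or.inr rfl
      have hAa2b2 : G.Adj a2 b2 := by
        obtain ⟨s, t, hst, -, ha2⟩ := hN a2
        have hs : G.Adj a2 s := (ha2 s).mpr (Or.inl rfl)
        have ht : G.Adj a2 t := (ha2 t).mpr (Or.inr rfl)
        rcases ha2sub s hs with rfl | rfl
        · rcases ha2sub t ht with rfl | rfl
          · exact absurd rfl hst
          · exact ht
        · exact hs
      have ha2' : ∀ x, G.Adj a2 x ↔ x = a ∨ x = b2 := by
        intro x
        constructor
        · exact ha2sub x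
        · rintro (rfl | rfl)
          · exact hAa2a
          · exact hAa2b2
      have hb2' : ∀ x, G.Adj b2 x ↔ x = b ∨ x = a2 := by
        intro x
        constructor
        · intro h
          rcases hall x with rfl | rfl | rfl | rfl | rfl
          · exact absurd h.symm hnvb2
          · exact absurd h.symm hnab2
          · exact Or.inl rfl
          · exact Or.inr rfl
          · exact absurd rfl h.ne'
        · rintro (rfl | rfl)
          · exact hbb2.symm
          · exact hAa2b2.symm
      exact SimpleGraph.iso_c5_of hvna hvnb (Ne.symm ha2v) (Ne.symm hb2v) hne_ab
        (Ne.symm ha2a) (Ne.symm hb2a) (Ne.symm ha2b) (Ne.symm hb2b) hcase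
        hv ha' ha2' hb2' hb' hall
  · intro h v
    rcases h with h | h
    · obtain ⟨e⟩ := h
      exact SimpleGraph.stress_eq_one_of_iso (n := 4) e (by decide) (by decide) v
    · obtain ⟨e⟩ := h
      exact SimpleGraph.stress_eq_one_of_iso (n := 5) e (by decide) (by decide) v
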